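/- arXiv:2601.15579 — 7 statements merged into one kernel-verified Lean document; each statement's English description precedes it below -/
import Mathlib

section
/- Let f : ℝ → ℝ be continuously differentiable and T-periodic (T > 0) with ∫₀ᵀ f = 0. Then ∫₀ᵀ f'(t)² dt ≥ ω² ∫₀ᵀ f(t)² dt, where ω = 2π/T. -/
open MeasureTheory Complex Set intervalIntegral ContinuousMap AddCircle
open scoped Real ENNReal

section helpers

variable {T : ℝ} [hT : Fact (0 < T)]

private lemma wirt_parseval_cont (G : C(AddCircle T, ℂ)) :
    ∑' n : ℤ, ‖fourierCoeff (⇑G) n‖ ^ 2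
      = ∫ z : AddCircle T, ‖G z‖ ^ 2 ∂haarAddCircle := by
  have h := tsum_sq_fourierCoeff (toLp (E := ℂ) 2 haarAddCircle ℂ G)
  simp_rw [fourierCoeff_toLp] at h
  rw [h]
  refine integral_congr_ae ?_
  filter_upwards [ContinuousMap.coeFn_toLp (p := 2) (μ := haarAddCircle) (𝕜 := ℂ) G] with z hz
  rw [hz]

private lemma wirt_summable_sq (G : C(AddCircle T, ℂ)) :
    Summable fun n : ℤ => ‖fourierCoeff (⇑G) n‖ ^ 2 := by
  have h := (lp.memℓp (fourierBasis.repr (toLp (E := ℂ) 2 haarAddCircle ℂ G))).summable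
    (by norm_num : 0 < (2 : ℝ≥0∞).toReal)
  simp only [fourierBasis_repr, fourierCoeff_toLp] at h
  have h2 : ((2 : ℝ≥0∞).toReal) = (2 : ℝ) := by norm_num
  simpa [h2, Real.rpow_two] using h

private lemma wirt_integral_haar (h : AddCircle T → ℝ) :
    ∫ z, h z ∂haarAddCircle = (1 / T) * ∫ x in (0:ℝ)..T, h ↑x := by
  have h1 : ∫ x in (0:ℝ)..(0 + T), h ↑x = ∫ z, h z ∂(volume : Measure (AddCircle T)) :=
    AddCircle.intervalIntegral_preimage T 0 h
  rw [zero_add] at h1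
  have h2 : ∫ z, h z ∂(volume : Measure (AddCircle T)) = T * ∫ z, h z ∂haarAddCircle := by
    rw [AddCircle.volume_eq_smul_haarAddCircle, MeasureTheory.integral_smul_measure,
      ENNReal.toReal_ofReal hT.out.le, smul_eq_mul]
  rw [h1, h2]
  rw [one_div, inv_mul_eq_div, mul_comm, mul_div_assoc]
  rw [div_self hT.out.ne', mul_one]

end helpers

/-- Wirtinger's inequality for T-periodic C¹ functions of zero average. -/
theorem wirtinger_periodic (T : ℝ) (hT : 0 < T) (f : ℝ → ℝ)
    (hf : ContDiff ℝ 1 f) (hper : ∀ t, f (t + T) = f t)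
    (hzero : ∫ t in (0:ℝ)..T, f t = 0) :
    ∫ t in (0:ℝ)..T, (deriv f t) ^ 2 ≥
      (2 * Real.pi / T) ^ 2 * ∫ t in (0:ℝ)..T, (f t) ^ 2 := by
  haveI hTf : Fact (0 < T) := ⟨hT⟩
  have hfc : Continuous f := hf.continuous
  have hdc : Continuous (deriv f) := hf.continuous_deriv le_rfl
  have hfd : Differentiable ℝ f := hf.differentiable one_ne_zero
  have hderper : ∀ t, deriv f (t + T) = deriv f t := by
    intro t
    have h1 : (fun x => f (x + T)) = f := funext hper
    calc deriv f (t + T) = deriv (fun x => f (x + T)) t := (deriv_comp_add_const f T t).symm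
      _ = deriv f t := by rw [h1]
  have hgper : Function.Periodic (fun t : ℝ => (f t : ℂ)) T := fun t => by
    simp [hper t]
  have hg'per : Function.Periodic (fun t : ℝ => ((deriv f t : ℝ) : ℂ)) T := fun t => by
    simp [hderper t]
  let G : C(AddCircle T, ℂ) :=
    ⟨hgper.lift, (Complex.continuous_ofReal.comp hfc).quotient_liftOn' _⟩
  let G' : C(AddCircle T, ℂ) :=
    ⟨hg'per.lift, (Complex.continuous_ofReal.comp hdc).quotient_liftOn' _⟩
  have hGcoe : ∀ x : ℝ, G ↑x = (f x : ℂ) := fun x => hgper.lift_coe x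
  have hG'coe : ∀ x : ℝ, G' ↑x = ((deriv f x : ℝ) : ℂ) := fun x => hg'per.lift_coe x
  set a : ℤ → ℂ := fun n => fourierCoeff (⇑G) n with ha_def
  set b : ℤ → ℂ := fun n => fourierCoeff (⇑G') n with hb_def
  have haInt : ∀ n : ℤ, a n
      = (1 / T : ℝ) • ∫ x in (0:ℝ)..T, fourier (-n) (x : AddCircle T) * (f x : ℂ) := by
    intro n
    show fourierCoeff (⇑G) n = _
    rw [fourierCoeff_eq_intervalIntegral (⇑G) n 0, zero_add]
    rfl
  have hbInt : ∀ n : ℤ, b n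
      = (1 / T : ℝ) • ∫ x in (0:ℝ)..T, fourier (-n) (x : AddCircle T) * ((deriv f x : ℝ) : ℂ) := by
    intro n
    show fourierCoeff (⇑G') n = _
    rw [fourierCoeff_eq_intervalIntegral (⇑G') n 0, zero_add]
    rfl
  have hfT : f T = f 0 := by simpa using hper 0
  -- integration by parts: b n = (2πin/T) a n
  have key : ∀ n : ℤ, b n = (2 * (π : ℂ) * I * n / T) * a n := by
    intro n
    have hu : ∀ x ∈ uIcc (0:ℝ) T, HasDerivAt (fun y : ℝ => fourier (-n) (y : AddCircle T))
        ((-2 * (π : ℂ) * I * n / T) * fourier (-n) (x : AddCircle T)) x :=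
      fun x _ => hasDerivAt_fourier_neg T n x
    have hv : ∀ x ∈ uIcc (0:ℝ) T, HasDerivAt (fun y : ℝ => (f y : ℂ)) (((deriv f x : ℝ) : ℂ)) x :=
      fun x _ => (hfd x).hasDerivAt.ofReal_comp
    have hcf : Continuous fun x : ℝ => fourier (-n) (x : AddCircle T) :=
      (map_continuous (fourier (-n))).comp (AddCircle.continuous_mk' T)
    have hiu : IntervalIntegrable
        (fun x : ℝ => (-2 * (π : ℂ) * I * n / T) * fourier (-n) (x : AddCircle T))
        volume 0 T := ((continuous_const.mul hcf)).intervalIntegrable 0 T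
    have hiv : IntervalIntegrable (fun x : ℝ => ((deriv f x : ℝ) : ℂ)) volume 0 T :=
      (Complex.continuous_ofReal.comp hdc).intervalIntegrable 0 T
    have ibp := intervalIntegral.integral_mul_deriv_eq_deriv_mul hu hv hiu hiv
    have hbound : fourier (-n) ((T : ℝ) : AddCircle T) * (f T : ℂ)
        - fourier (-n) ((0 : ℝ) : AddCircle T) * (f 0 : ℂ) = 0 := by
      have : ((T : ℝ) : AddCircle T) = ((0 : ℝ) : AddCircle T) := by
        rw [AddCircle.coe_period]
        norm_cast
      rw [this, hfT, sub_self]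
    rw [hbound, zero_sub] at ibp
    have ibp2 : ∫ x in (0:ℝ)..T, fourier (-n) (x : AddCircle T) * ((deriv f x : ℝ) : ℂ)
        = (2 * (π : ℂ) * I * n / T) * ∫ x in (0:ℝ)..T, fourier (-n) (x : AddCircle T) * (f x : ℂ) := by
      rw [ibp]
      rw [← intervalIntegral.integral_const_mul]
      rw [← intervalIntegral.integral_neg]
      refine intervalIntegral.integral_congr fun x hx => ?_
      ring
    rw [hbInt n, haInt n, ibp2, Complex.real_smul, Complex.real_smul]
    push_cast
    ring
  have ha0 : a 0 = 0 := by
    rw [haInt 0]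
    have : ∫ x in (0:ℝ)..T, fourier (-(0:ℤ)) (x : AddCircle T) * (f x : ℂ)
        = ((∫ x in (0:ℝ)..T, f x : ℝ) : ℂ) := by
      rw [← intervalIntegral.integral_ofReal]
      refine intervalIntegral.integral_congr fun x hx => ?_
      simp [fourier_zero]
    rw [this, hzero]
    simp
  -- Parseval for G and G'
  have P1 : ∑' n : ℤ, ‖a n‖ ^ 2 = (1 / T) * ∫ x in (0:ℝ)..T, (f x) ^ 2 := by
    rw [show (fun n : ℤ => ‖a n‖ ^ 2) = fun n : ℤ => ‖fourierCoeff (⇑G) n‖ ^ 2 from rfl]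
    rw [wirt_parseval_cont G, wirt_integral_haar (fun z => ‖G z‖ ^ 2)]
    congr 1
    refine intervalIntegral.integral_congr fun x hx => ?_
    rw [hGcoe x, Complex.norm_real, Real.norm_eq_abs, _root_.sq_abs]
  have P2 : ∑' n : ℤ, ‖b n‖ ^ 2 = (1 / T) * ∫ x in (0:ℝ)..T, (deriv f x) ^ 2 := by
    rw [show (fun n : ℤ => ‖b n‖ ^ 2) = fun n : ℤ => ‖fourierCoeff (⇑G') n‖ ^ 2 from rfl]
    rw [wirt_parseval_cont G', wirt_integral_haar (fun z => ‖G' z‖ ^ 2)]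
    congr 1
    refine intervalIntegral.integral_congr fun x hx => ?_
    rw [hG'coe x, Complex.norm_real, Real.norm_eq_abs, _root_.sq_abs]
  have hSb : Summable fun n : ℤ => ‖b n‖ ^ 2 := wirt_summable_sq G'
  have hterm : ∀ n : ℤ, (2 * π / T) ^ 2 * ‖a n‖ ^ 2 ≤ ‖b n‖ ^ 2 := by
    intro n
    rcases eq_or_ne n 0 with rfl | hn
    · rw [ha0]
      simp
    · rw [key n, norm_mul, mul_pow]
      have hnorm : ‖(2 * (π : ℂ) * I * n / T : ℂ)‖ = 2 * π * |(n : ℝ)| / T := by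
        rw [norm_div, norm_mul, norm_mul, norm_mul]
        simp [Complex.norm_real, abs_of_pos Real.pi_pos, abs_of_pos hT]
      rw [hnorm]
      have h1 : (1 : ℝ) ≤ |(n : ℝ)| := by
        rw [← Int.cast_abs]
        exact_mod_cast Int.one_le_abs hn
      have h3 : (0:ℝ) ≤ 2 * π / T := by positivity
      have h2 : (2 * π / T) ≤ 2 * π * |(n : ℝ)| / T := by
        have he : 2 * π * |(n : ℝ)| / T = (2 * π / T) * |(n : ℝ)| := by ring
        rw [he]
        nlinarith [Real.pi_pos]
      have h4 : (2 * π / T) ^ 2 ≤ (2 * π * |(n : ℝ)| / T) ^ 2 := pow_le_pow_left₀ h3 h2 2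
      exact mul_le_mul_of_nonneg_right h4 (sq_nonneg _)
  have hSa : Summable fun n : ℤ => (2 * π / T) ^ 2 * ‖a n‖ ^ 2 :=
    Summable.of_nonneg_of_le (fun n => by positivity) hterm hSb
  have main : (2 * π / T) ^ 2 * ((1 / T) * ∫ x in (0:ℝ)..T, (f x) ^ 2)
      ≤ (1 / T) * ∫ x in (0:ℝ)..T, (deriv f x) ^ 2 := by
    rw [← P1, ← P2, ← tsum_mul_left]
    exact Summable.tsum_le_tsum hterm hSa hSb
  rw [ge_iff_le]
  calc (2 * π / T) ^ 2 * ∫ x in (0:ℝ)..T, (f x) ^ 2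
      = T * ((2 * π / T) ^ 2 * ((1 / T) * ∫ x in (0:ℝ)..T, (f x) ^ 2)) := by
        field_simp
    _ ≤ T * ((1 / T) * ∫ x in (0:ℝ)..T, (deriv f x) ^ 2) :=
        mul_le_mul_of_nonneg_left main hT.le
    _ = ∫ x in (0:ℝ)..T, (deriv f x) ^ 2 := by field_simp
end

section
/- Let a : ℝ → ℝ be continuous and T-periodic (T > 0), and let b ∈ ℝ. If w : ℝ → ℝ is a C¹ function satisfying w'(t) + a(t) w(t) = b for all t, w(t+T) = w(t) for all t, and ∫₀ᵀ w(t) dt = 0, then b = 0 and w ≡ 0. -/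
open Set Filter Topology intervalIntegral

/-- A continuous function with zero integral over `[0,T]` takes the value `0`. -/
lemma exists_zero_of_avg_zero (T : ℝ) (hT : 0 < T) (w : ℝ → ℝ) (hwc : Continuous w)
    (havg : ∫ t in (0:ℝ)..T, w t = 0) : ∃ t0, w t0 = 0 := by
  have hint : IntervalIntegrable w MeasureTheory.volume 0 T := hwc.intervalIntegrable _ _
  have h1 : ∃ t1, w t1 ≤ 0 := by
    by_contra h
    push_neg at h
    have := intervalIntegral_pos_of_pos hint h hT
    linarith
  have h2 : ∃ t2, 0 ≤ w t2 := by
    by_contra h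
    push_neg at h
    have hint' : IntervalIntegrable (fun t => -w t) MeasureTheory.volume 0 T :=
      (hwc.neg).intervalIntegrable _ _
    have := intervalIntegral_pos_of_pos hint' (fun x => by simpa using (h x).le.lt_of_ne (h x).ne) hT
    rw [intervalIntegral.integral_neg, havg] at this
    simp at this
  obtain ⟨t1, h1⟩ := h1
  obtain ⟨t2, h2⟩ := h2
  have h0 : (0:ℝ) ∈ Set.uIcc (w t1) (w t2) := Set.mem_uIcc.2 (Or.inl ⟨h1, h2⟩)
  have := intermediate_value_uIcc (f := w) (a := t1) (b := t2) hwc.continuousOn h0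
  obtain ⟨t0, _, ht0⟩ := this
  exact ⟨t0, ht0⟩

/-- If `b > 0`, no periodic zero-average solution. -/
lemma aux_pos (T : ℝ) (hT : 0 < T) (a : ℝ → ℝ) (b : ℝ) (w : ℝ → ℝ)
    (hw : ContDiff ℝ 1 w) (heq : ∀ t, deriv w t + a t * w t = b)
    (hper : ∀ t, w (t + T) = w t) (havg : ∫ t in (0:ℝ)..T, w t = 0)
    (hb : 0 < b) : False := by
  have hwd : Differentiable ℝ w := hw.differentiable one_ne_zero
  have hwc : Continuous w := hw.continuous
  obtain ⟨t0, ht0⟩ := exists_zero_of_avg_zero T hT w hwc havg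
  have hderiv : ∀ s, w s = 0 → HasDerivAt w b s := by
    intro s hs
    have h := heq s
    rw [hs, mul_zero, add_zero] at h
    exact h ▸ (hwd s).hasDerivAt
  -- w is positive just to the right of t0
  have hslope0 : ∀ᶠ t in 𝓝[>] t0, 0 < w t := by
    have h1 : Tendsto (slope w t0) (𝓝[≠] t0) (𝓝 b) :=
      hasDerivAt_iff_tendsto_slope.mp (hderiv t0 ht0)
    have h2 : ∀ᶠ t in 𝓝[≠] t0, 0 < slope w t0 t := h1.eventually (eventually_gt_nhds hb)
    have h3 : 𝓝[>] t0 ≤ 𝓝[≠] t0 := nhdsWithin_mono _ (fun x hx => ne_of_gt hx)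
    filter_upwards [h3 h2, self_mem_nhdsWithin] with t ht htmem
    have hlt : (0:ℝ) < t - t0 := sub_pos.2 htmem
    have : 0 < (w t - w t0) / (t - t0) := by simpa [slope_def_field, div_eq_iff] using ht
    have := (div_pos_iff.mp this)
    rcases this with ⟨hnum, _⟩ | ⟨_, hden⟩
    · linarith [ht0 ▸ hnum]
    · linarith
  obtain ⟨u, hu, huP⟩ := mem_nhdsGT_iff_exists_Ioc_subset.mp hslope0
  set u' : ℝ := min u (t0 + T / 2) with hu'def
  have hu'1 : t0 < u' := lt_min hu (by linarith)
  have hu'2 : u' < t0 + T := by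
    have : u' ≤ t0 + T / 2 := min_le_right _ _
    linarith
  have hwu' : 0 < w u' := huP ⟨hu'1, min_le_left _ _⟩
  -- zero set beyond u'
  set Z : Set ℝ := Icc u' (t0 + T) ∩ w ⁻¹' {0} with hZdef
  have hZc : IsClosed Z := isClosed_Icc.inter (isClosed_singleton.preimage hwc)
  have hZne : Z.Nonempty := ⟨t0 + T, ⟨hu'2.le, le_rfl⟩, by simp [hper t0, ht0]⟩
  have hZbdd : BddBelow Z := ⟨u', fun z hz => hz.1.1⟩
  set s : ℝ := sInf Z with hsdef
  have hsZ : s ∈ Z := hZc.csInf_mem hZne hZbdd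
  have hws : w s = 0 := hsZ.2
  have hu's : u' < s := by
    rcases lt_or_eq_of_le hsZ.1.1 with h | h
    · exact h
    · exfalso; rw [h, hws] at hwu'; exact lt_irrefl 0 hwu'
  -- w is positive on [u', s)
  have hpos : ∀ t ∈ Ico u' s, 0 < w t := by
    intro t ht
    by_contra hc
    push_neg at hc
    have h0 : (0:ℝ) ∈ Set.uIcc (w u') (w t) := Set.mem_uIcc.2 (Or.inr ⟨hc, hwu'.le⟩)
    obtain ⟨z, hz, hwz⟩ := intermediate_value_uIcc (f := w) hwc.continuousOn h0
    rw [Set.uIcc_of_le ht.1] at hz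
    have hzZ : z ∈ Z := ⟨⟨hz.1, le_trans hz.2 (le_trans ht.2.le hsZ.1.2)⟩, hwz⟩
    have : s ≤ z := csInf_le hZbdd hzZ
    have : z < s := lt_of_le_of_lt hz.2 ht.2
    linarith
  -- but w must be negative just left of s
  have hslope1 : ∀ᶠ t in 𝓝[<] s, w t < 0 := by
    have h1 : Tendsto (slope w s) (𝓝[≠] s) (𝓝 b) :=
      hasDerivAt_iff_tendsto_slope.mp (hderiv s hws)
    have h2 : ∀ᶠ t in 𝓝[≠] s, 0 < slope w s t := h1.eventually (eventually_gt_nhds hb)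
    have h3 : 𝓝[<] s ≤ 𝓝[≠] s := nhdsWithin_mono _ (fun x hx => ne_of_lt hx)
    filter_upwards [h3 h2, self_mem_nhdsWithin] with t ht htmem
    have hlt : t - s < 0 := sub_neg.2 htmem
    have hq : 0 < (w t - w s) / (t - s) := by simpa [slope_def_field] using ht
    rcases div_pos_iff.mp hq with ⟨_, hden⟩ | ⟨hnum, _⟩
    · linarith
    · rw [hws] at hnum; linarith
  have hIoo : ∀ᶠ t in 𝓝[<] s, t ∈ Ioo u' s := eventually_of_mem (Ioo_mem_nhdsLT_of_mem ⟨hu's, le_rfl⟩) (fun x hx => hx)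
  obtain ⟨t, htneg, htIoo⟩ := (hslope1.and hIoo).exists
  exact absurd (hpos t ⟨htIoo.1.le, htIoo.2⟩) (not_lt.2 htneg.le)

/-- If w' + a(t) w = b with w T-periodic of zero average, then b = 0 and w ≡ 0. -/
theorem periodic_zero_average_forces_trivial (T : ℝ) (hT : 0 < T) (a : ℝ → ℝ)
    (ha : Continuous a) (haper : ∀ t, a (t + T) = a t) (b : ℝ) (w : ℝ → ℝ)
    (hw : ContDiff ℝ 1 w) (heq : ∀ t, deriv w t + a t * w t = b)
    (hper : ∀ t, w (t + T) = w t) (havg : ∫ t in (0:ℝ)..T, w t = 0) :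
    b = 0 ∧ ∀ t, w t = 0 := by
  have hwd : Differentiable ℝ w := hw.differentiable one_ne_zero
  have hwc : Continuous w := hw.continuous
  have hb0 : b = 0 := by
    rcases lt_trichotomy b 0 with h | h | h
    · exfalso
      apply aux_pos T hT a (-b) (fun t => -w t) hw.neg ?_ (fun t => by simp [hper t])
        ?_ (by linarith)
      · intro t
        have := heq t
        have hd : deriv (fun t => -w t) t = -deriv w t := deriv.neg
        rw [hd]; ring_nf; linarith
      · rw [intervalIntegral.integral_neg, havg]; simp
    · exact h
    · exact absurd (aux_pos T hT a b w hw heq hper havg h) id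
  refine ⟨hb0, ?_⟩
  -- integrating factor: (e^{A} w)' = 0
  obtain ⟨t0, ht0⟩ := exists_zero_of_avg_zero T hT w hwc havg
  set A : ℝ → ℝ := fun t => ∫ s in (0:ℝ)..t, a s with hAdef
  have hA : ∀ t, HasDerivAt A (a t) t := fun t =>
    intervalIntegral.integral_hasDerivAt_right (ha.intervalIntegrable _ _)
      (ha.stronglyMeasurableAtFilter _ _) ha.continuousAt
  set h : ℝ → ℝ := fun t => Real.exp (A t) * w t with hhdef
  have hd : ∀ t, HasDerivAt h 0 t := by
    intro t
    have h1 : HasDerivAt (fun t => Real.exp (A t)) (Real.exp (A t) * a t) t := (hA t).exp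
    have h2 : HasDerivAt h (Real.exp (A t) * a t * w t + Real.exp (A t) * deriv w t) t :=
      h1.mul (hwd t).hasDerivAt
    have h3 : deriv w t = - (a t * w t) := by have := heq t; rw [hb0] at this; linarith
    convert h2 using 1
    rw [h3]; ring
  have hconst : ∀ t, h t = h t0 :=
    fun t => is_const_of_deriv_eq_zero (fun x => (hd x).differentiableAt)
      (fun x => (hd x).deriv) t t0
  intro t
  have := hconst t
  rw [hhdef] at this
  simp only [ht0, mul_zero] at this
  have hexp : Real.exp (A t) ≠ 0 := Real.exp_ne_zero _
  exact (mul_eq_zero.mp this).resolve_left hexp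
end

section
/- Let f : ℝ × ℝ → ℝ be continuous, and let u, v : ℝ → ℝ be C¹ and T-periodic (T > 0). Suppose u'(t) = f(t, u(t)) for all t and v'(t) < f(t, v(t)) for all t (v is a strict sub solution). Then either v(t) > u(t) for all t or v(t) < u(t) for all t. -/
open Filter Topology Set

/-- A differentiable periodic function whose derivative is negative at every zero
has no zero. -/
lemma no_zero_of_neg_deriv_at_zero (T : ℝ) (hT : 0 < T) (w : ℝ → ℝ)
    (hw : Differentiable ℝ w) (hper : ∀ t, w (t + T) = w t)
    (hz : ∀ t, w t = 0 → deriv w t < 0) : ∀ t, w t ≠ 0 := by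
  intro t0 h0
  have hd : deriv w t0 < 0 := hz t0 h0
  have hslope : Tendsto (slope w t0) (𝓝[≠] t0) (𝓝 (deriv w t0)) :=
    hasDerivAt_iff_tendsto_slope.mp (hw t0).hasDerivAt
  -- find t1 ∈ (t0, t0+T) with w t1 < 0
  have hev : ∀ᶠ t in 𝓝[>] t0, slope w t0 t < 0 :=
    (hslope.mono_left (nhdsWithin_mono _ (fun x hx => ne_of_gt hx))).eventually
      (Iio_mem_nhds hd)
  have hev2 : ∀ᶠ t in 𝓝[>] t0, t < t0 + T :=
    eventually_nhdsWithin_of_eventually_nhds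
      (Filter.Tendsto.eventually_lt_const (by linarith) tendsto_id)
  obtain ⟨t1, ht1mem, hs1, ht1lt⟩ :=
    (eventually_mem_nhdsWithin.and (hev.and hev2)).exists
  have ht1gt : t0 < t1 := ht1mem
  have hwt1 : w t1 < 0 := by
    rw [slope_def_field, h0, sub_zero] at hs1
    have := div_neg_iff.mp hs1
    rcases this with ⟨_, h⟩ | ⟨h, _⟩
    · linarith
    · exact h
  -- set of zeros of w in [t1, t0+T]
  set S : Set ℝ := Icc t1 (t0 + T) ∩ w ⁻¹' {0} with hS
  have hSclosed : IsClosed S :=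
    isClosed_Icc.inter (isClosed_singleton.preimage hw.continuous)
  have hSne : S.Nonempty := by
    refine ⟨t0 + T, ⟨le_of_lt ht1lt, le_refl _⟩, ?_⟩
    simp [hper t0, h0]
  have hSbdd : BddBelow S := ⟨t1, fun x hx => hx.1.1⟩
  set s := sInf S with hs
  have hsmem : s ∈ S := hSclosed.csInf_mem hSne hSbdd
  have hws : w s = 0 := hsmem.2
  have hst1 : t1 < s := by
    rcases lt_or_eq_of_le hsmem.1.1 with h | h
    · exact h
    · rw [← h] at hws; rw [hws] at hwt1; exact absurd hwt1 (lt_irrefl 0)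
  -- w < 0 on [t1, s)
  have hneg : ∀ t ∈ Ico t1 s, w t < 0 := by
    intro t ht
    by_contra hge
    push_neg at hge
    have hne : w t ≠ 0 := by
      intro he
      have : t ∈ S := ⟨⟨ht.1, le_trans ht.2.le hsmem.1.2⟩, he⟩
      exact absurd (csInf_le hSbdd this) (not_le.mpr ht.2)
    have hpos : 0 < w t := lt_of_le_of_ne hge (Ne.symm hne)
    obtain ⟨c, hc, hwc⟩ := intermediate_value_Icc ht.1
      (hw.continuous.continuousOn) (⟨hwt1.le, hpos.le⟩ : (0:ℝ) ∈ Icc (w t1) (w t))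
    have hcS : c ∈ S := ⟨⟨hc.1, le_trans (hc.2.trans ht.2.le) hsmem.1.2⟩, hwc⟩
    have := csInf_le hSbdd hcS
    have : c < s := lt_of_le_of_lt hc.2 ht.2
    linarith [csInf_le hSbdd hcS]
  -- derivative at s is < 0, but left slopes are positive
  have hds : deriv w s < 0 := hz s hws
  have hslope2 : Tendsto (slope w s) (𝓝[<] s) (𝓝 (deriv w s)) :=
    (hasDerivAt_iff_tendsto_slope.mp (hw s).hasDerivAt).mono_left
      (nhdsWithin_mono _ (fun x hx => ne_of_lt hx))
  have hevpos : ∀ᶠ t in 𝓝[<] s, 0 ≤ slope w s t := by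
    filter_upwards [Ioo_mem_nhdsLT_of_mem ⟨hst1, le_refl s⟩] with t ht
    have hwt : w t < 0 := hneg t ⟨ht.1.le, ht.2⟩
    have h2 : slope w s t = w t / (t - s) := by
      rw [slope_def_field, hws, sub_zero]
    rw [h2]
    exact le_of_lt (div_pos_of_neg_of_neg hwt (by linarith [ht.2]))
  have : 0 ≤ deriv w s := ge_of_tendsto hslope2 hevpos
  linarith

/-- A T-periodic solution and a strict sub solution never intersect; they are ordered. -/
theorem sub_solution_ordered (T : ℝ) (hT : 0 < T) (f : ℝ → ℝ → ℝ)
    (hf : Continuous fun p : ℝ × ℝ => f p.1 p.2)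
    (u v : ℝ → ℝ) (hu : ContDiff ℝ 1 u) (hv : ContDiff ℝ 1 v)
    (huper : ∀ t, u (t + T) = u t) (hvper : ∀ t, v (t + T) = v t)
    (hueq : ∀ t, deriv u t = f t (u t))
    (hvsub : ∀ t, deriv v t < f t (v t)) :
    (∀ t, v t > u t) ∨ (∀ t, v t < u t) := by
  have hud : Differentiable ℝ u := hu.differentiable one_ne_zero
  have hvd : Differentiable ℝ v := hv.differentiable one_ne_zero
  set w : ℝ → ℝ := fun t => v t - u t with hwdef
  have hwd : Differentiable ℝ w := hvd.sub hud
  have hwper : ∀ t, w (t + T) = w t := fun t => by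
    simp [hwdef, huper t, hvper t]
  have hwz : ∀ t, w t = 0 → deriv w t < 0 := by
    intro t ht
    have heq : v t = u t := by
      have := ht
      simp only [hwdef] at this
      linarith [sub_eq_zero.mp this]
    have hder : deriv w t = deriv v t - deriv u t :=
      deriv_sub (hvd t) (hud t)
    rw [hder, hueq t, ← heq]
    linarith [hvsub t]
  have hne : ∀ t, w t ≠ 0 := no_zero_of_neg_deriv_at_zero T hT w hwd hwper hwz
  have key : ∀ t, v t ≠ u t := by
    intro t h
    exact hne t (by simp [hwdef, h])
  rcases lt_or_gt_of_ne (key 0) with h0 | h0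
  · right
    intro t
    rcases lt_or_gt_of_ne (key t) with h | h
    · exact h
    · exfalso
      have : (0:ℝ) ∈ uIcc (w 0) (w t) := by
        constructor <;> simp only [hwdef, inf_le_iff, le_sup_iff] <;>
          [left; right] <;> linarith
      obtain ⟨c, _, hc⟩ := intermediate_value_uIcc hwd.continuous.continuousOn this
      exact hne c hc
  · left
    intro t
    rcases lt_or_gt_of_ne (key t) with h | h
    · exfalso
      have : (0:ℝ) ∈ uIcc (w 0) (w t) := by
        constructor <;> simp only [hwdef, inf_le_iff, le_sup_iff] <;>
          [right; left] <;> linarith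
      obtain ⟨c, _, hc⟩ := intermediate_value_uIcc hwd.continuous.continuousOn this
      exact hne c hc
    · exact h
end

section
/- Let g : ℝ × ℝ → ℝ be continuous, 2π-periodic in θ, with g(θ,0) = 0 for all θ, and suppose r : ℝ → ℝ is a 2π-periodic C¹ solution of r' + g(θ,r) = μ with μ ≠ 0 and ∫₀^{2π} r(θ) dθ > 0. Then r(θ) > 0 for all θ. -/
private lemma key_lemma (r : ℝ → ℝ) (hc : Continuous r) (hd : Differentiable ℝ r)
    (hper : Function.Periodic r (2 * Real.pi)) (μ : ℝ) (hμ : 0 < μ)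
    (hz : ∀ z, r z = 0 → deriv r z = μ)
    (b : ℝ) (hb : 0 < r b) (θ₀ : ℝ) (h0 : r θ₀ ≤ 0) : False := by
  -- there exists a zero of r
  obtain ⟨z, hz0⟩ : ∃ z, r z = 0 := by
    rcases eq_or_lt_of_le h0 with h | h
    · exact ⟨θ₀, h⟩
    · have : (0 : ℝ) ∈ Set.uIcc (r θ₀) (r b) := Set.mem_uIcc.2 (Or.inl ⟨h.le, hb.le⟩)
      obtain ⟨w, _, hw⟩ := intermediate_value_uIcc (f := r) hc.continuousOn this
      exact ⟨w, hw⟩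
  -- move the zero into [b, b + 2π)
  obtain ⟨y, hy, hyz⟩ := hper.exists_mem_Ico Real.two_pi_pos z b
  have hry : r y = 0 := by rw [← hyz, hz0]
  have hby : b < y := by
    rcases lt_or_eq_of_le hy.1 with h | h
    · exact h
    · exact absurd hry (by rw [← h]; exact hb.ne')
  -- first zero after b
  set S : Set ℝ := {t | t ∈ Set.Icc b y ∧ r t = 0} with hS
  have hSne : S.Nonempty := ⟨y, ⟨hby.le, le_refl y⟩, hry⟩
  have hSbdd : BddBelow S := ⟨b, fun t ht => ht.1.1⟩
  have hSclosed : IsClosed S := by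
    have : S = Set.Icc b y ∩ r ⁻¹' {0} := by ext t; simp [hS, Set.mem_Icc]
    rw [this]
    exact isClosed_Icc.inter (isClosed_singleton.preimage hc)
  set c := sInf S with hc'
  have hcS : c ∈ S := hSclosed.csInf_mem hSne hSbdd
  have hrc : r c = 0 := hcS.2
  have hbc : b < c := by
    rcases lt_or_eq_of_le hcS.1.1 with h | h
    · exact h
    · exact absurd hrc (by rw [← h]; exact hb.ne')
  -- r > 0 on [b, c)
  have hpos : ∀ t ∈ Set.Ico b c, 0 < r t := by
    intro t ht
    by_contra hle
    push_neg at hle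
    rcases eq_or_lt_of_le hle with h | h
    · have : t ∈ S := ⟨⟨ht.1, ht.2.le.trans hcS.1.2⟩, h⟩
      exact absurd (csInf_le hSbdd this) (not_le.2 ht.2)
    · have : (0 : ℝ) ∈ Set.uIcc (r b) (r t) := Set.mem_uIcc.2 (Or.inr ⟨h.le, hb.le⟩)
      obtain ⟨w, hw, hw0⟩ := intermediate_value_uIcc (f := r) hc.continuousOn this
      rw [Set.uIcc_of_le ht.1] at hw
      have : w ∈ S := ⟨⟨hw.1, hw.2.trans (ht.2.le.trans hcS.1.2)⟩, hw0⟩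
      have := csInf_le hSbdd this
      have : c ≤ t := this.trans hw.2
      exact absurd this (not_le.2 ht.2)
  -- derivative at c is μ, but left slopes are nonpositive
  have hder : HasDerivAt r μ c := by
    have := (hd c).hasDerivAt
    rwa [hz c hrc] at this
  have hderW : HasDerivWithinAt r μ (Set.Iio c) c := hder.hasDerivWithinAt
  rw [hasDerivWithinAt_iff_tendsto_slope] at hderW
  have hdiff : Set.Iio c \ {c} = Set.Iio c := by
    ext t; simp only [Set.mem_diff, Set.mem_Iio, Set.mem_singleton_iff]
    exact ⟨fun h => h.1, fun h => ⟨h, h.ne⟩⟩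
  rw [hdiff] at hderW
  have hne : (nhdsWithin c (Set.Iio c)).NeBot := nhdsLT_neBot c
  have hev : ∀ᶠ t in nhdsWithin c (Set.Iio c), slope r c t ≤ 0 := by
    filter_upwards [Ioo_mem_nhdsLT_of_mem (Set.mem_Ioc.2 ⟨hbc, le_refl c⟩)] with t ht
    have hrt : 0 < r t := hpos t ⟨ht.1.le, ht.2⟩
    have : slope r c t = r t / (t - c) := by
      rw [slope_def_field, hrc]; ring_nf
    rw [this]
    exact le_of_lt (div_neg_of_pos_of_neg hrt (sub_neg.2 ht.2))
  have : μ ≤ 0 := le_of_tendsto hderW hev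
  exact absurd this (not_le.2 hμ)

/-- For μ ≠ 0, a 2π-periodic solution of r' + g(θ,r) = μ with positive average
is everywhere positive, provided g(θ,0) = 0. -/
theorem periodic_solution_positive (g : ℝ → ℝ → ℝ)
    (hg : Continuous fun p : ℝ × ℝ => g p.1 p.2)
    (hgper : ∀ θ r, g (θ + 2 * Real.pi) r = g θ r)
    (hg0 : ∀ θ, g θ 0 = 0)
    (μ : ℝ) (hμ : μ ≠ 0) (r : ℝ → ℝ) (hr : ContDiff ℝ 1 r)
    (hrper : ∀ θ, r (θ + 2 * Real.pi) = r θ)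
    (hreq : ∀ θ, deriv r θ + g θ (r θ) = μ)
    (havg : 0 < ∫ θ in (0:ℝ)..(2 * Real.pi), r θ) :
    ∀ θ, 0 < r θ := by
  have hd : Differentiable ℝ r := hr.differentiable one_ne_zero
  have hc : Continuous r := hr.continuous
  have hz : ∀ z, r z = 0 → deriv r z = μ := by
    intro z hz0
    have := hreq z
    rwa [hz0, hg0, add_zero] at this
  -- r positive somewhere
  obtain ⟨b, hb⟩ : ∃ b, 0 < r b := by
    by_contra h
    push_neg at h
    have h1 : (0:ℝ) ≤ ∫ θ in (0:ℝ)..(2 * Real.pi), -r θ :=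
      intervalIntegral.integral_nonneg Real.two_pi_pos.le (fun u _ => by linarith [h u])
    rw [intervalIntegral.integral_neg] at h1
    have : (∫ θ in (0:ℝ)..(2 * Real.pi), r θ) ≤ 0 := by linarith
    exact absurd havg (not_lt.2 this)
  intro θ
  by_contra hle
  push_neg at hle
  rcases hμ.lt_or_gt with hneg | hpos
  · -- reflect: s θ = r (-θ)
    set s : ℝ → ℝ := fun t => r (-t) with hs
    have hds : ∀ t, HasDerivAt s (-(deriv r (-t))) t := by
      intro t
      have h1 : HasDerivAt (fun t : ℝ => -t) (-1) t := (hasDerivAt_id t).neg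
      have h2 := ((hd (-t)).hasDerivAt).comp t h1
      exact (by simpa [mul_comm] using h2 : HasDerivAt (r ∘ Neg.neg) (-deriv r (-t)) t)
    have hsc : Continuous s := hc.comp continuous_neg
    have hsd : Differentiable ℝ s := fun t => (hds t).differentiableAt
    have hsper : Function.Periodic s (2 * Real.pi) := by
      intro t
      show r (-(t + 2 * Real.pi)) = r (-t)
      have h := hrper (-t - 2 * Real.pi)
      rw [sub_add_cancel] at h
      rw [show -(t + 2 * Real.pi) = -t - 2 * Real.pi by ring, ← h]
    have hsz : ∀ z, s z = 0 → deriv s z = -μ := by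
      intro z hz0
      rw [(hds z).deriv, hz (-z) hz0]
    exact key_lemma s hsc hsd hsper (-μ) (by linarith) hsz (-b) (by simpa [hs] using hb)
      (-θ) (by simpa [hs] using hle)
  · exact key_lemma r hc hd (fun x => hrper x) μ hpos hz b hb θ hle
end

section
/- Let a, f : ℝ → ℝ be continuous and T-periodic, μ ∈ ℝ, and let u : ℝ → ℝ be a C¹ T-periodic solution of u' = u(a(t) − u) − μ f(t). Then μ ∫₀ᵀ f(t) dt ≤ (1/4) ∫₀ᵀ a(t)² dt. -/
/-- General upper bound for the fishing take, for any T-periodic a(t). -/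
theorem general_fishing_bound (T : ℝ) (hT : 0 < T) (a f : ℝ → ℝ)
    (ha : Continuous a) (haper : ∀ t, a (t + T) = a t)
    (hf : Continuous f) (hfper : ∀ t, f (t + T) = f t)
    (μ : ℝ) (u : ℝ → ℝ) (hu : ContDiff ℝ 1 u) (huper : ∀ t, u (t + T) = u t)
    (hueq : ∀ t, deriv u t = u t * (a t - u t) - μ * f t) :
    μ * ∫ t in (0:ℝ)..T, f t ≤ (1 / 4) * ∫ t in (0:ℝ)..T, (a t) ^ 2 := by
  have hu' : Continuous u := hu.continuous
  have hderiv : ∀ t, HasDerivAt u (deriv u t) t := fun t =>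
    (hu.differentiable one_ne_zero t).hasDerivAt
  have hcd : Continuous (deriv u) := by
    have : deriv u = fun t => u t * (a t - u t) - μ * f t := funext hueq
    rw [this]; continuity
  have hint : (∫ t in (0:ℝ)..T, deriv u t) = u T - u 0 :=
    intervalIntegral.integral_deriv_eq_sub (fun t _ => hu.differentiable one_ne_zero t)
      (hcd.intervalIntegrable 0 T)
  have hzero : (∫ t in (0:ℝ)..T, deriv u t) = 0 := by
    rw [hint]
    have := huper 0
    simp at this
    rw [this]; ring
  have heq : (∫ t in (0:ℝ)..T, deriv u t)
      = (∫ t in (0:ℝ)..T, u t * (a t - u t)) - μ * ∫ t in (0:ℝ)..T, f t := by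
    rw [intervalIntegral.integral_congr (g := fun t => u t * (a t - u t) - μ * f t)
      (fun t _ => hueq t)]
    rw [intervalIntegral.integral_sub, intervalIntegral.integral_const_mul]
    · exact (hu'.mul (ha.sub hu')).intervalIntegrable 0 T
    · exact ((continuous_const.mul hf)).intervalIntegrable 0 T
  have hmu : μ * ∫ t in (0:ℝ)..T, f t = ∫ t in (0:ℝ)..T, u t * (a t - u t) := by
    have := hzero; rw [heq] at this; linarith
  rw [hmu, ← intervalIntegral.integral_const_mul]
  apply intervalIntegral.integral_mono_on hT.le
  · exact (hu'.mul (ha.sub hu')).intervalIntegrable 0 T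
  · exact (continuous_const.mul (ha.pow 2)).intervalIntegrable 0 T
  · intro t _
    nlinarith [sq_nonneg (u t - a t / 2)]
end

section
/- Let a, e : ℝ → ℝ be continuous and T-periodic with ∫₀ᵀ a(t) dt ≠ 0. Then for every ξ ∈ ℝ there exist μ* ∈ ℝ and a C¹ T-periodic function z : ℝ → ℝ such that z'(t) + a(t) z(t) = μ* + e(t) for all t, and (1/T) ∫₀ᵀ z(t) dt = ξ. -/
open Real intervalIntegral MeasureTheory

noncomputable def Afun (a : ℝ → ℝ) (t : ℝ) : ℝ := ∫ s in (0:ℝ)..t, a s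

noncomputable def Bfun (a f : ℝ → ℝ) (t : ℝ) : ℝ := ∫ s in (0:ℝ)..t, Real.exp (Afun a s) * f s

noncomputable def cconst (T : ℝ) (a f : ℝ → ℝ) : ℝ := Bfun a f T / (Real.exp (Afun a T) - 1)

noncomputable def zfun (T : ℝ) (a f : ℝ → ℝ) (t : ℝ) : ℝ :=
  Real.exp (-(Afun a t)) * (cconst T a f + Bfun a f t)

lemma Afun_hasDerivAt {a : ℝ → ℝ} (ha : Continuous a) (t : ℝ) :
    HasDerivAt (Afun a) (a t) t :=
  integral_hasDerivAt_right (ha.intervalIntegrable _ _) (ha.stronglyMeasurableAtFilter _ _)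
    ha.continuousAt

lemma Afun_continuous {a : ℝ → ℝ} (ha : Continuous a) : Continuous (Afun a) :=
  continuous_iff_continuousAt.mpr fun t => (Afun_hasDerivAt ha t).differentiableAt.continuousAt

lemma g_continuous {a f : ℝ → ℝ} (ha : Continuous a) (hf : Continuous f) :
    Continuous (fun s => Real.exp (Afun a s) * f s) :=
  (Afun_continuous ha).rexp.mul hf

lemma Bfun_hasDerivAt {a f : ℝ → ℝ} (ha : Continuous a) (hf : Continuous f) (t : ℝ) :
    HasDerivAt (Bfun a f) (Real.exp (Afun a t) * f t) t :=
  integral_hasDerivAt_right ((g_continuous ha hf).intervalIntegrable _ _)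
    ((g_continuous ha hf).stronglyMeasurableAtFilter _ _) (g_continuous ha hf).continuousAt

lemma Bfun_continuous {a f : ℝ → ℝ} (ha : Continuous a) (hf : Continuous f) :
    Continuous (Bfun a f) :=
  continuous_iff_continuousAt.mpr fun t => (Bfun_hasDerivAt ha hf t).differentiableAt.continuousAt

lemma zfun_hasDerivAt {T : ℝ} {a f : ℝ → ℝ} (ha : Continuous a) (hf : Continuous f) (t : ℝ) :
    HasDerivAt (zfun T a f) (f t - a t * zfun T a f t) t := by
  have h1 : HasDerivAt (fun t => Real.exp (-(Afun a t)))
      (Real.exp (-(Afun a t)) * (-(a t))) t :=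
    ((Afun_hasDerivAt ha t).neg).exp
  have h2 : HasDerivAt (fun t => cconst T a f + Bfun a f t)
      (Real.exp (Afun a t) * f t) t := (Bfun_hasDerivAt ha hf t).const_add _
  have h3 : HasDerivAt (zfun T a f) (Real.exp (-(Afun a t)) * (-(a t)) * (cconst T a f + Bfun a f t)
      + Real.exp (-(Afun a t)) * (Real.exp (Afun a t) * f t)) t := h1.mul h2
  convert h3 using 1
  unfold zfun
  have hee : Real.exp (-(Afun a t)) * Real.exp (Afun a t) = 1 := by
    rw [← Real.exp_add]; simp
  linear_combination (-(f t)) * hee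

lemma zfun_continuous {T : ℝ} {a f : ℝ → ℝ} (ha : Continuous a) (hf : Continuous f) :
    Continuous (zfun T a f) :=
  (((Afun_continuous ha).neg).rexp).mul (continuous_const.add (Bfun_continuous ha hf))

lemma zfun_contDiff {T : ℝ} {a f : ℝ → ℝ} (ha : Continuous a) (hf : Continuous f) :
    ContDiff ℝ 1 (zfun T a f) := by
  rw [contDiff_one_iff_deriv]
  refine ⟨fun t => (zfun_hasDerivAt ha hf t).differentiableAt, ?_⟩
  have hder : deriv (zfun T a f) = fun t => f t - a t * zfun T a f t := by
    funext t; exact (zfun_hasDerivAt ha hf t).deriv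
  rw [hder]
  exact hf.sub (ha.mul (zfun_continuous ha hf))

lemma Afun_add {T : ℝ} {a : ℝ → ℝ} (ha : Continuous a) (haper : ∀ t, a (t + T) = a t) (t : ℝ) :
    Afun a (t + T) = Afun a t + Afun a T := by
  have h1 : (∫ s in (0:ℝ)..t, a (s + T)) = ∫ s in T..(t + T), a s := by
    rw [intervalIntegral.integral_comp_add_right]; norm_num [add_comm]
  have h2 : (∫ s in (0:ℝ)..t, a s) = ∫ s in T..(t + T), a s := by
    rw [← h1]; congr 1; funext s; rw [haper]
  have h3 := intervalIntegral.integral_add_adjacent_intervals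
    (ha.intervalIntegrable 0 T : IntervalIntegrable a volume 0 T)
    (ha.intervalIntegrable T (t + T) : IntervalIntegrable a volume T (t+T))
  show (∫ s in (0:ℝ)..(t+T), a s) = Afun a t + Afun a T
  rw [← h3, ← h2]
  unfold Afun; ring

lemma Bfun_add {T : ℝ} {a f : ℝ → ℝ} (ha : Continuous a) (hf : Continuous f)
    (haper : ∀ t, a (t + T) = a t) (hfper : ∀ t, f (t + T) = f t) (t : ℝ) :
    Bfun a f (t + T) = Bfun a f T + Real.exp (Afun a T) * Bfun a f t := by
  have hg := g_continuous ha hf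
  have h1 : (∫ s in (0:ℝ)..t, Real.exp (Afun a (s + T)) * f (s + T))
      = ∫ s in T..(t + T), Real.exp (Afun a s) * f s := by
    rw [intervalIntegral.integral_comp_add_right (fun s => Real.exp (Afun a s) * f s)]
    norm_num [add_comm]
  have h2 : (∫ s in (0:ℝ)..t, Real.exp (Afun a (s + T)) * f (s + T))
      = Real.exp (Afun a T) * Bfun a f t := by
    unfold Bfun
    rw [← intervalIntegral.integral_const_mul]
    congr 1; funext s
    rw [Afun_add ha haper, hfper, Real.exp_add]; ring
  have h3 := intervalIntegral.integral_add_adjacent_intervals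
    (hg.intervalIntegrable 0 T : IntervalIntegrable _ volume 0 T)
    (hg.intervalIntegrable T (t + T) : IntervalIntegrable _ volume T (t+T))
  show (∫ s in (0:ℝ)..(t+T), Real.exp (Afun a s) * f s)
      = Bfun a f T + Real.exp (Afun a T) * Bfun a f t
  rw [← h3, ← h1, h2]
  rfl

lemma exp_AT_ne_one {T : ℝ} {a : ℝ → ℝ} (hnonres : Afun a T ≠ 0) :
    Real.exp (Afun a T) - 1 ≠ 0 := by
  intro h
  apply hnonres
  have : Real.exp (Afun a T) = Real.exp 0 := by rw [Real.exp_zero]; linarith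
  exact Real.exp_injective this

lemma zfun_periodic {T : ℝ} {a f : ℝ → ℝ} (ha : Continuous a) (hf : Continuous f)
    (haper : ∀ t, a (t + T) = a t) (hfper : ∀ t, f (t + T) = f t)
    (hnonres : Afun a T ≠ 0) (t : ℝ) : zfun T a f (t + T) = zfun T a f t := by
  have hE1 := exp_AT_ne_one hnonres
  have hE : Real.exp (Afun a T) ≠ 0 := Real.exp_ne_zero _
  unfold zfun cconst
  rw [Afun_add ha haper, Bfun_add ha hf haper hfper]
  have hsplit : -(Afun a t + Afun a T) = -Afun a t + -Afun a T := by ring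
  rw [hsplit, Real.exp_add, Real.exp_neg, Real.exp_neg]
  field_simp
  ring

lemma Bone_pos {T : ℝ} {a : ℝ → ℝ} (hT : 0 < T) (ha : Continuous a) :
    0 < Bfun a (fun _ => 1) T := by
  apply intervalIntegral.intervalIntegral_pos_of_pos
    ((g_continuous ha continuous_const).intervalIntegrable 0 T) _ hT
  intro x; positivity

lemma Bone_nonneg {t : ℝ} {a : ℝ → ℝ} (ht : 0 ≤ t) (_ha : Continuous a) :
    0 ≤ Bfun a (fun _ => 1) t :=
  intervalIntegral.integral_nonneg ht (fun u _ => by positivity)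

lemma Bone_mono {T t : ℝ} {a : ℝ → ℝ} (ht : t ≤ T) (ha : Continuous a) :
    Bfun a (fun _ => 1) t ≤ Bfun a (fun _ => 1) T := by
  have hg := g_continuous ha (continuous_const : Continuous (fun _ : ℝ => (1:ℝ)))
  have h3 := intervalIntegral.integral_add_adjacent_intervals
    (hg.intervalIntegrable 0 t : IntervalIntegrable _ volume 0 t)
    (hg.intervalIntegrable t T : IntervalIntegrable _ volume t T)
  have h4 : (0:ℝ) ≤ ∫ s in t..T, Real.exp (Afun a s) * 1 :=
    intervalIntegral.integral_nonneg ht (fun u _ => by positivity)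
  show Bfun a (fun _ => 1) t ≤ Bfun a (fun _ => 1) T
  unfold Bfun at h3 ⊢
  linarith [h3]

lemma int_zone_ne_zero {T : ℝ} {a : ℝ → ℝ} (hT : 0 < T) (ha : Continuous a)
    (hnonres : Afun a T ≠ 0) :
    (∫ t in (0:ℝ)..T, zfun T a (fun _ => 1) t) ≠ 0 := by
  have hBpos := Bone_pos hT ha
  have hInt : IntervalIntegrable (zfun T a (fun _ => 1)) volume 0 T :=
    (zfun_continuous ha continuous_const).intervalIntegrable 0 T
  rcases lt_or_gt_of_ne hnonres with hneg | hpos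
  · -- A T < 0 : E < 1, z < 0 on [0,T]
    have hE1 : Real.exp (Afun a T) < 1 := Real.exp_lt_one_iff.mpr hneg
    have hEpos : (0:ℝ) < Real.exp (Afun a T) := Real.exp_pos _
    have hzneg : ∀ x ∈ Set.Ioo (0:ℝ) T, 0 < -zfun T a (fun _ => 1) x := by
      intro x hx
      have hB1 : Bfun a (fun _ => 1) x ≤ Bfun a (fun _ => 1) T := Bone_mono hx.2.le ha
      have hc : cconst T a (fun _ => 1) + Bfun a (fun _ => 1) T < 0 := by
        unfold cconst
        rw [div_add' _ _ _ (by linarith : Real.exp (Afun a T) - 1 ≠ 0)]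
        apply div_neg_of_pos_of_neg
        · nlinarith
        · linarith
      have : cconst T a (fun _ => 1) + Bfun a (fun _ => 1) x < 0 := by linarith
      unfold zfun
      nlinarith [Real.exp_pos (-(Afun a x))]
    have h5 : 0 < ∫ t in (0:ℝ)..T, -zfun T a (fun _ => 1) t :=
      intervalIntegral.intervalIntegral_pos_of_pos_on hInt.neg hzneg hT
    rw [intervalIntegral.integral_neg] at h5
    linarith
  · have hE1 : (1:ℝ) < Real.exp (Afun a T) := Real.one_lt_exp_iff.mpr hpos
    have hzpos : ∀ x ∈ Set.Ioo (0:ℝ) T, 0 < zfun T a (fun _ => 1) x := by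
      intro x hx
      have hB1 : 0 ≤ Bfun a (fun _ => 1) x := Bone_nonneg hx.1.le ha
      have hc : 0 < cconst T a (fun _ => 1) := div_pos hBpos (by linarith)
      unfold zfun
      nlinarith [Real.exp_pos (-(Afun a x))]
    have h5 := intervalIntegral.intervalIntegral_pos_of_pos_on hInt hzpos hT
    linarith

/-- Continuation of solutions of prescribed average, nonresonant case. -/
theorem prescribed_average_solution (T : ℝ) (hT : 0 < T) (a e : ℝ → ℝ)
    (ha : Continuous a) (haper : ∀ t, a (t + T) = a t)
    (he : Continuous e) (heper : ∀ t, e (t + T) = e t)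
    (hnonres : ∫ t in (0:ℝ)..T, a t ≠ 0) (ξ : ℝ) :
    ∃ (μstar : ℝ) (z : ℝ → ℝ), ContDiff ℝ 1 z ∧ (∀ t, z (t + T) = z t) ∧
      (∀ t, deriv z t + a t * z t = μstar + e t) ∧
      (1 / T) * ∫ t in (0:ℝ)..T, z t = ξ := by
  have hA : Afun a T ≠ 0 := hnonres
  set w := zfun T a (fun _ => 1) with hw
  set ze := zfun T a e with hze
  set I := ∫ t in (0:ℝ)..T, w t with hI
  set J := ∫ t in (0:ℝ)..T, ze t with hJ
  have hIne : I ≠ 0 := int_zone_ne_zero hT ha hA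
  set μ := (ξ * T - J) / I with hμ
  refine ⟨μ, fun t => μ * w t + ze t, ?_, ?_, ?_, ?_⟩
  · exact (contDiff_const.mul (zfun_contDiff ha continuous_const)).add (zfun_contDiff ha he)
  · intro t
    show μ * w (t + T) + ze (t + T) = μ * w t + ze t
    rw [hw, hze, zfun_periodic ha continuous_const haper (fun _ => rfl) hA,
      zfun_periodic ha he haper heper hA]
  · intro t
    have hd : HasDerivAt (fun t => μ * w t + ze t)
        (μ * (1 - a t * w t) + (e t - a t * ze t)) t :=
      ((zfun_hasDerivAt ha continuous_const t).const_mul μ).add (zfun_hasDerivAt ha he t)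
    rw [hd.deriv]; ring
  · have h1 : (∫ t in (0:ℝ)..T, (μ * w t + ze t)) = μ * I + J := by
      rw [intervalIntegral.integral_add (f := fun t => μ * w t) (g := ze)
        ((continuous_const.mul (zfun_continuous ha continuous_const)).intervalIntegrable 0 T)
        ((zfun_continuous ha he).intervalIntegrable 0 T),
        intervalIntegral.integral_const_mul]
    rw [h1, hμ]
    field_simp
    ring
end

section
/- Let g : ℝ × ℝ → ℝ be continuous and T-periodic in t with |g(t,u)| ≤ c₀ for all t, u, let e : ℝ → ℝ be continuous T-periodic with ∫₀ᵀ e = 0, and let U : ℝ → ℝ be a C¹ T-periodic solution of U' + g(t, ξ + U) = μ + e(t) with ∫₀ᵀ U = 0, for some ξ, μ ∈ ℝ. Then ∫₀ᵀ U'(t)² dt ≤ C for a constant C depending only on c₀, T, and ∫₀ᵀ e(t)² dt (not on ξ or μ). -/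
/-- Uniform a priori estimate on ∫₀ᵀ U'², depending only on c₀, T and ∫₀ᵀ e². -/
theorem uniform_apriori_estimate :
    ∃ C : ℝ → ℝ → ℝ → ℝ,
      ∀ (c₀ T : ℝ), 0 < T → 0 < c₀ →
      ∀ g : ℝ → ℝ → ℝ, (Continuous fun p : ℝ × ℝ => g p.1 p.2) →
        (∀ t u, g (t + T) u = g t u) → (∀ t u, |g t u| ≤ c₀) →
      ∀ e : ℝ → ℝ, Continuous e → (∀ t, e (t + T) = e t) →
        (∫ t in (0:ℝ)..T, e t = 0) →
      ∀ (ξ μ : ℝ) (U : ℝ → ℝ), ContDiff ℝ 1 U → (∀ t, U (t + T) = U t) →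
        (∫ t in (0:ℝ)..T, U t = 0) →
        (∀ t, deriv U t + g t (ξ + U t) = μ + e t) →
        ∫ t in (0:ℝ)..T, (deriv U t) ^ 2 ≤ C c₀ T (∫ t in (0:ℝ)..T, (e t) ^ 2) := by
  refine ⟨fun c₀ T E => 8 * c₀ ^ 2 * T + 2 * E, ?_⟩
  intro c₀ T hT hc g hgc hgp hgb e he hep he0 ξ μ U hU hUp hU0 heq
  have hUd : Differentiable ℝ U := hU.differentiable one_ne_zero
  have hU' : Continuous (deriv U) := hU.continuous_deriv le_rfl
  set G : ℝ → ℝ := fun t => g t (ξ + U t) with hGdef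
  have hGc : Continuous G :=
    hgc.comp (continuous_id.prodMk (continuous_const.add hU.continuous))
  have hGb : ∀ t, |G t| ≤ c₀ := fun t => hgb t _
  -- deriv U t = μ + e t - G t
  have hderiv : ∀ t, deriv U t = μ + e t - G t := by
    intro t; have := heq t; simp only [hGdef]; linarith
  -- ∫ deriv U = 0
  have hintU' : ∫ t in (0:ℝ)..T, deriv U t = 0 := by
    rw [intervalIntegral.integral_deriv_eq_sub (fun t _ => hUd t)
      (hU'.intervalIntegrable 0 T)]
    have : U T = U 0 := by simpa using hUp 0
    simp [this]
  -- ∫ G = μ * T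
  have hintG : ∫ t in (0:ℝ)..T, G t = μ * T := by
    have h1 : ∫ t in (0:ℝ)..T, deriv U t = ∫ t in (0:ℝ)..T, (μ + e t - G t) := by
      exact intervalIntegral.integral_congr (fun t _ => hderiv t)
    rw [intervalIntegral.integral_sub (f := fun t => μ + e t) ((continuous_const.add he).intervalIntegrable 0 T)
      (hGc.intervalIntegrable 0 T),
      intervalIntegral.integral_add (intervalIntegrable_const) (he.intervalIntegrable 0 T),
      he0, intervalIntegral.integral_const] at h1
    rw [hintU'] at h1
    have : (T - 0) • μ = μ * T := by simp [smul_eq_mul]; ring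
    rw [this] at h1
    linarith
  -- |μ| ≤ c₀
  have hμ : |μ| ≤ c₀ := by
    have habs : |∫ t in (0:ℝ)..T, G t| ≤ c₀ * T := by
      have h1 : |∫ t in (0:ℝ)..T, G t| ≤ ∫ t in (0:ℝ)..T, |G t| := by
        exact intervalIntegral.abs_integral_le_integral_abs hT.le
      have h2 : ∫ t in (0:ℝ)..T, |G t| ≤ ∫ t in (0:ℝ)..T, c₀ := by
        apply intervalIntegral.integral_mono_on hT.le
          (hGc.abs.intervalIntegrable 0 T) intervalIntegrable_const
        intro t _; exact hGb t
      have h3 : ∫ t in (0:ℝ)..T, (c₀:ℝ) = c₀ * T := by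
        simp [mul_comm]
      linarith
    rw [hintG, abs_mul, abs_of_pos hT] at habs
    calc |μ| = |μ| * T / T := by field_simp
    _ ≤ c₀ * T / T := by apply div_le_div_of_nonneg_right habs hT.le
    _ = c₀ := by field_simp
  -- pointwise bound
  have hpt : ∀ t ∈ Set.Icc (0:ℝ) T, (deriv U t) ^ 2 ≤ 8 * c₀ ^ 2 + 2 * (e t) ^ 2 := by
    intro t _
    rw [hderiv t]
    have h1 := hGb t
    have h2 := abs_le.mp hμ
    have h3 := abs_le.mp h1
    nlinarith [sq_nonneg (μ - G t - e t), sq_nonneg (μ - G t + e t), sq_nonneg (e t)]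
  have hmono : ∫ t in (0:ℝ)..T, (deriv U t) ^ 2 ≤
      ∫ t in (0:ℝ)..T, (8 * c₀ ^ 2 + 2 * (e t) ^ 2) := by
    apply intervalIntegral.integral_mono_on hT.le
      ((hU'.pow 2).intervalIntegrable 0 T)
      ((continuous_const.add (continuous_const.mul (he.pow 2))).intervalIntegrable 0 T)
    exact hpt
  have hrhs : ∫ t in (0:ℝ)..T, (8 * c₀ ^ 2 + 2 * (e t) ^ 2) =
      8 * c₀ ^ 2 * T + 2 * ∫ t in (0:ℝ)..T, (e t) ^ 2 := by
    rw [intervalIntegral.integral_add (g := fun t => 2 * (e t) ^ 2) intervalIntegrable_const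
      ((continuous_const.mul (he.pow 2)).intervalIntegrable 0 T),
      intervalIntegral.integral_const, intervalIntegral.integral_const_mul]
    simp [mul_comm]
  show ∫ t in (0:ℝ)..T, (deriv U t) ^ 2 ≤
      8 * c₀ ^ 2 * T + 2 * ∫ t in (0:ℝ)..T, (e t) ^ 2
  linarith
end
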